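/- Suppose L⁽¹⁾ is a self-adjoint operator on L²(ℝ³) commuting with rotations, with ker L⁽¹⁾ = span{f'Y_{1,m} : m = −1,0,1}, and H⁽¹⁾ = L⁽¹⁾ + |r⟩⟨f| + |f⟩⟨r| + γ|f⟩⟨f| ≥ 0 with r radial. Let R be a radial function with L⁽¹⁾R = μf, (R,f) ≠ 0, and μ ≠ 0. Then any radial v with H⁽¹⁾v = 0 and (f,v) = 0 satisfies v = 0. -/
import Mathlib


noncomputable section
open scoped RealInnerProductSpace

/-- let `L` be a symmetric operator commuting with rotations (in
particular mapping radial functions to radial functions) whose kernel is spanned by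
the three translation modes `y₁, y₂, y₃ = f'Y_{1,m}` (which are not radial), and let
`H = L + |r⟩⟨f| + |f⟩⟨r| + γ|f⟩⟨f| ≥ 0` with `f, r` radial. If `R` is radial with
`LR = μf`, `(R,f) ≠ 0`, `μ ≠ 0`, then any radial `v` with `Hv = 0` and `(f,v) = 0`
vanishes, i.e. `0` is a simple eigenvalue of `H` restricted to radial functions. -/
theorem stmt18 {V : Type*} [NormedAddCommGroup V] [InnerProductSpace ℝ V]
    (L : V →ₗ[ℝ] V) (Rad : Submodule ℝ V) (y₁ y₂ y₃ f r R v : V) (γ μ : ℝ)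
    (hLsym : ∀ a b : V, ⟪L a, b⟫ = ⟪a, L b⟫)
    (hLRad : ∀ w ∈ Rad, L w ∈ Rad)
    (hker : LinearMap.ker L = Submodule.span ℝ {y₁, y₂, y₃})
    (hnorad : Submodule.span ℝ ({y₁, y₂, y₃} : Set V) ⊓ Rad = ⊥)
    (hf : f ∈ Rad) (hr : r ∈ Rad) (hR : R ∈ Rad) (hv : v ∈ Rad)
    (hLR : L R = μ • f) (hRf : ⟪R, f⟫ ≠ 0) (hμ : μ ≠ 0)
    (hHpos : ∀ w : V,
      0 ≤ ⟪w, L w + ⟪r, w⟫ • f + ⟪f, w⟫ • r + (γ * ⟪f, w⟫) • f⟫)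
    (hHv : L v + ⟪r, v⟫ • f + ⟪f, v⟫ • r + (γ * ⟪f, v⟫) • f = 0)
    (hfv : ⟪f, v⟫ = 0) :
    v = 0 := by
  -- With ⟪f,v⟫ = 0 the eigenvalue equation reduces to L v + ⟪r,v⟫ • f = 0.
  have hHv' : L v + ⟪r, v⟫ • f = 0 := by
    simpa [hfv] using hHv
  -- Set ṽ = v + μ⁻¹ ⟪r,v⟫ • R.
  set c : ℝ := μ⁻¹ * ⟪r, v⟫ with hc
  have hLvt : L (v + c • R) = 0 := by
    have : L (v + c • R) = L v + c • (μ • f) := by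
      simp [map_add, map_smul, hLR]
    rw [this, smul_smul, hc]
    have : μ⁻¹ * ⟪r, v⟫ * μ = ⟪r, v⟫ := by field_simp
    rw [this]
    exact hHv'
  have hvtRad : v + c • R ∈ Rad := Rad.add_mem hv (Rad.smul_mem c hR)
  have hvtker : v + c • R ∈ Submodule.span ℝ ({y₁, y₂, y₃} : Set V) := by
    rw [← hker]; exact hLvt
  have hvt0 : v + c • R = 0 := by
    have : v + c • R ∈ Submodule.span ℝ ({y₁, y₂, y₃} : Set V) ⊓ Rad :=
      ⟨hvtker, hvtRad⟩
    simpa [hnorad] using this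
  -- Take inner product with f.
  have hfR : ⟪f, R⟫ ≠ 0 := by rwa [real_inner_comm]
  have h0 : (0 : ℝ) = c * ⟪f, R⟫ := by
    have := congrArg (fun w => ⟪f, w⟫) hvt0
    simpa [inner_add_right, inner_smul_right, hfv] using this.symm
  have hc0 : c = 0 := by
    rcases mul_eq_zero.mp h0.symm with h | h
    · exact h
    · exact absurd h hfR
  have := hvt0
  rw [hc0, zero_smul, add_zero] at this
  exact this
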